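/- arXiv:2106.00808 — 4 statements merged into one kernel-verified Lean document; each statement's English description precedes it below -/
import Mathlib

section
/- In the unconfounded multi-environment contextual bandit model, define the environment-independent conditional mean reward Q(x,a) := ∫∫ f(x, s(x,u), a, r) dQ_U(u) dQ_R(r), and for each environment e ∈ E and policy π the value V(π, μ_e) := ∫_𝒳 Σ_{a∈A} π(a|x) Q(x,a) dμ_e(x). Then any policy π* that is greedy with respect to Q solves the maximin problem: inf_{e∈E} V(π*, μ_e) = sup_{π policy} inf_{e∈E} V(π, μ_e). -/
open MeasureTheory

/-- A policy: for each observed context `x`, a probability mass function on the finite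
action set `A`, measurable in `x` for each action. -/
structure Policy (𝒳 A : Type*) [MeasurableSpace 𝒳] [Fintype A] where
  prob : 𝒳 → A → ℝ
  nonneg : ∀ x a, 0 ≤ prob x a
  sum_one : ∀ x, ∑ a, prob x a = 1
  measurable : ∀ a, Measurable fun x => prob x a

/-- Value of a policy with respect to a mean-reward function `Q` and a context
distribution `μ`. -/
noncomputable def value {𝒳 A : Type*} [MeasurableSpace 𝒳] [Fintype A]
    (π : Policy 𝒳 A) (Q : 𝒳 → A → ℝ) (μ : Measure 𝒳) : ℝ :=
  ∫ x, ∑ a, π.prob x a * Q x a ∂μ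

/-- A policy is greedy w.r.t. `Q` if it only puts mass on actions maximizing `Q(x, ·)`. -/
def IsGreedy {𝒳 A : Type*} [MeasurableSpace 𝒳] [Fintype A] [Nonempty A]
    (π : Policy 𝒳 A) (Q : 𝒳 → A → ℝ) : Prop :=
  ∀ x a, 0 < π.prob x a → Q x a = ⨆ a' : A, Q x a'

/-- Theorem 1 of the paper (unconfounded multi-environment contextual bandits):
any policy greedy w.r.t. the environment-independent conditional mean reward `Q`
solves the maximin problem. -/
theorem greedy_policy_solves_maximin
    {𝒳 𝒰 ℰU ℰR : Type*} [MeasurableSpace 𝒳] [MeasurableSpace 𝒰]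
    [MeasurableSpace ℰU] [MeasurableSpace ℰR]
    {A : Type*} [Fintype A] [Nonempty A]
    (QU : Measure ℰU) [IsProbabilityMeasure QU]
    (QR : Measure ℰR) [IsProbabilityMeasure QR]
    (s : 𝒳 → ℰU → 𝒰) (hs : Measurable fun p : 𝒳 × ℰU => s p.1 p.2)
    (f : 𝒳 → 𝒰 → A → ℰR → ℝ)
    (hf_meas : ∀ a, Measurable fun p : 𝒳 × 𝒰 × ℰR => f p.1 p.2.1 a p.2.2)
    (hf_bdd : ∃ C, ∀ x u a r, |f x u a r| ≤ C)
    {E : Type*} [Nonempty E]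
    (μ : E → Measure 𝒳) (hμ : ∀ e, IsProbabilityMeasure (μ e))
    (Q : 𝒳 → A → ℝ)
    (hQ : ∀ x a, Q x a = ∫ r, ∫ u, f x (s x u) a r ∂QU ∂QR)
    (πstar : Policy 𝒳 A) (hgreedy : IsGreedy πstar Q) :
    (⨅ e, value πstar Q (μ e)) = ⨆ π : Policy 𝒳 A, ⨅ e, value π Q (μ e) := by
  obtain ⟨C, hC⟩ := hf_bdd
  -- nonemptiness of noise spaces
  have hER : Nonempty ℰR := by
    by_contra h
    rw [not_nonempty_iff] at h
    have := measure_univ (μ := QR)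
    simp [Set.univ_eq_empty_iff.mpr h] at this
  have hEU : Nonempty ℰU := by
    by_contra h
    rw [not_nonempty_iff] at h
    have := measure_univ (μ := QU)
    simp [Set.univ_eq_empty_iff.mpr h] at this
  -- measurability of Q
  have hQa : ∀ a : A, Measurable fun x => Q x a := by
    intro a
    have h1 : Measurable (fun q : (𝒳 × ℰR) × ℰU => f q.1.1 (s q.1.1 q.2) a q.1.2) := by
      exact (hf_meas a).comp
        ((measurable_fst.comp measurable_fst).prodMk
          ((hs.comp ((measurable_fst.comp measurable_fst).prodMk measurable_snd)).prodMk
            (measurable_snd.comp measurable_fst)))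
    have h2 : StronglyMeasurable fun p : 𝒳 × ℰR => ∫ u, f p.1 (s p.1 u) a p.2 ∂QU :=
      h1.stronglyMeasurable.integral_prod_right'
    have h3 : StronglyMeasurable fun x : 𝒳 => ∫ r, ∫ u, f x (s x u) a r ∂QU ∂QR :=
      h2.integral_prod_right'
    have heq : (fun x => Q x a) = fun x => ∫ r, ∫ u, f x (s x u) a r ∂QU ∂QR := by
      funext x; exact hQ x a
    rw [heq]; exact h3.measurable
  -- bound on Q
  have hCQ : ∀ x a, |Q x a| ≤ C := by
    intro x a
    rw [hQ]
    have hinner : ∀ r : ℰR, ‖∫ u, f x (s x u) a r ∂QU‖ ≤ C := by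
      intro r
      calc ‖∫ u, f x (s x u) a r ∂QU‖ ≤ C * (QU Set.univ).toReal :=
            norm_integral_le_of_norm_le_const (Filter.Eventually.of_forall fun u => by
              simpa [Real.norm_eq_abs] using hC x (s x u) a r)
        _ = C := by simp
    calc |∫ r, ∫ u, f x (s x u) a r ∂QU ∂QR|
        ≤ C * (QR Set.univ).toReal :=
          norm_integral_le_of_norm_le_const (Filter.Eventually.of_forall hinner)
      _ = C := by simp
  -- pointwise bound on policy integrand
  have habs : ∀ (π : Policy 𝒳 A) (x : 𝒳), |∑ a, π.prob x a * Q x a| ≤ C := by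
    intro π x
    calc |∑ a, π.prob x a * Q x a| ≤ ∑ a, |π.prob x a * Q x a| :=
          Finset.abs_sum_le_sum_abs _ _
      _ ≤ ∑ a, π.prob x a * C := by
          apply Finset.sum_le_sum; intro a _
          rw [abs_mul, abs_of_nonneg (π.nonneg x a)]
          exact mul_le_mul_of_nonneg_left (hCQ x a) (π.nonneg x a)
      _ = C := by rw [← Finset.sum_mul, π.sum_one, one_mul]
  -- integrability
  have hint : ∀ (π : Policy 𝒳 A) (e : E),
      Integrable (fun x => ∑ a, π.prob x a * Q x a) (μ e) := by
    intro π e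
    haveI := hμ e
    have hm : Measurable fun x => ∑ a, π.prob x a * Q x a :=
      Finset.measurable_sum _ fun a _ => (π.measurable a).mul (hQa a)
    refine ⟨hm.aestronglyMeasurable, ?_⟩
    apply HasFiniteIntegral.of_bounded (C := C)
    filter_upwards with x
    simpa [Real.norm_eq_abs] using habs π x
  -- pointwise comparison with the greedy policy
  have key : ∀ (π : Policy 𝒳 A) (x : 𝒳),
      ∑ a, π.prob x a * Q x a ≤ ∑ a, πstar.prob x a * Q x a := by
    intro π x
    have hbdd : BddAbove (Set.range fun a' : A => Q x a') :=
      Set.Finite.bddAbove (Set.finite_range _)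
    have hstar : ∑ a, πstar.prob x a * Q x a = ⨆ a' : A, Q x a' := by
      have hcongr : ∀ a ∈ Finset.univ,
          πstar.prob x a * Q x a = πstar.prob x a * (⨆ a' : A, Q x a') := by
        intro a _
        rcases eq_or_lt_of_le (πstar.nonneg x a) with h | h
        · rw [← h, zero_mul, zero_mul]
        · rw [hgreedy x a h]
      rw [Finset.sum_congr rfl hcongr, ← Finset.sum_mul, πstar.sum_one, one_mul]
    rw [hstar]
    calc ∑ a, π.prob x a * Q x a ≤ ∑ a, π.prob x a * (⨆ a' : A, Q x a') := by
          apply Finset.sum_le_sum; intro a _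
          exact mul_le_mul_of_nonneg_left (le_ciSup hbdd a) (π.nonneg x a)
      _ = ⨆ a' : A, Q x a' := by rw [← Finset.sum_mul, π.sum_one, one_mul]
  -- value comparison
  have hval : ∀ (π : Policy 𝒳 A) (e : E), value π Q (μ e) ≤ value πstar Q (μ e) :=
    fun π e => integral_mono (hint π e) (hint πstar e) (key π)
  -- lower bound on values
  have hlow : ∀ (π : Policy 𝒳 A) (e : E), -C ≤ value π Q (μ e) := by
    intro π e
    haveI := hμ e
    calc -C = ∫ _x, (-C : ℝ) ∂(μ e) := by simp
      _ ≤ value π Q (μ e) :=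
          integral_mono (integrable_const _) (hint π e)
            (fun x => neg_le_of_abs_le (habs π x))
  have hinf : ∀ π : Policy 𝒳 A, (⨅ e, value π Q (μ e)) ≤ ⨅ e, value πstar Q (μ e) := by
    intro π
    exact ciInf_mono ⟨-C, fun y ⟨e, he⟩ => he ▸ hlow π e⟩ (hval π)
  haveI : Nonempty (Policy 𝒳 A) := ⟨πstar⟩
  apply le_antisymm
  · exact le_ciSup ⟨⨅ e, value πstar Q (μ e), fun y ⟨π, hπ⟩ => hπ ▸ hinf π⟩ πstar
  · exact ciSup_le hinf
end

section
/- Let (Ω, F, P) be a probability space carrying random elements X : Ω → 𝒳, ε_U : Ω → ℰ_U and ε_R : Ω → ℰ_R that are jointly independent, with ε_U having law Q_U and ε_R having law Q_R. Fix an action a ∈ A and set U := s(X, ε_U) and R := f(X, U, a, ε_R). Then the conditional expectation of R given the σ-algebra generated by X is P-almost surely equal to Q(·,a) ∘ X, where Q(x,a) := ∫∫ f(x, s(x,u), a, r) dQ_U(u) dQ_R(r). In particular, the conditional mean reward of the constant policy selecting a, given the observed context, is given by the same function Q(·,a) of the context regardless of the law of X (i.e., regardless of the environment). -/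
open MeasureTheory

/-- Key invariance identity from the proof of Theorem 1: in the unconfounded model,
the conditional mean reward of the constant policy selecting `a`, given the observed
context `X`, is `P`-a.s. equal to `Q(·, a) ∘ X`, where
`Q(x, a) = ∫∫ f(x, s(x,u), a, r) dQ_U(u) dQ_R(r)`, regardless of the law of `X`.
Joint independence of `(X, ε_U, ε_R)` is encoded by the independence of `X` from the
pair `(ε_U, ε_R)` together with the independence of `ε_U` and `ε_R`. -/
theorem condexp_reward_eq_Q_of_unconfounded
    {Ω 𝒳 𝒰 ℰU ℰR : Type*} [MeasurableSpace Ω] [MeasurableSpace 𝒳] [MeasurableSpace 𝒰]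
    [MeasurableSpace ℰU] [MeasurableSpace ℰR]
    {A : Type*} [Fintype A] [Nonempty A]
    (P : Measure Ω) [IsProbabilityMeasure P]
    (X : Ω → 𝒳) (εU : Ω → ℰU) (εR : Ω → ℰR)
    (hX : Measurable X) (hεU : Measurable εU) (hεR : Measurable εR)
    (hindep1 : ProbabilityTheory.IndepFun X (fun ω => (εU ω, εR ω)) P)
    (hindep2 : ProbabilityTheory.IndepFun εU εR P)
    (QU : Measure ℰU) [IsProbabilityMeasure QU] (hQU : P.map εU = QU)
    (QR : Measure ℰR) [IsProbabilityMeasure QR] (hQR : P.map εR = QR)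
    (s : 𝒳 → ℰU → 𝒰) (hs : Measurable fun p : 𝒳 × ℰU => s p.1 p.2)
    (f : 𝒳 → 𝒰 → A → ℰR → ℝ)
    (hf_meas : ∀ a, Measurable fun p : 𝒳 × 𝒰 × ℰR => f p.1 p.2.1 a p.2.2)
    (hf_bdd : ∃ C, ∀ x u a r, |f x u a r| ≤ C)
    (a : A)
    (Q : 𝒳 → A → ℝ)
    (hQ : ∀ x a, Q x a = ∫ r, ∫ u, f x (s x u) a r ∂QU ∂QR) :
    P[(fun ω => f (X ω) (s (X ω) (εU ω)) a (εR ω)) | MeasurableSpace.comap X inferInstance]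
      =ᵐ[P] fun ω => Q (X ω) a := by
  classical
  obtain ⟨C, hC⟩ := hf_bdd
  set ν : Measure (ℰU × ℰR) := QU.prod QR with hν
  set φ : 𝒳 × ℰU × ℰR → ℝ := fun p => f p.1 (s p.1 p.2.1) a p.2.2 with hφ
  have hφ_meas : Measurable φ := by
    have hm : Measurable fun p : 𝒳 × ℰU × ℰR => (p.1, s p.1 p.2.1, p.2.2) :=
      measurable_fst.prodMk
        ((hs.comp (measurable_fst.prodMk (measurable_fst.comp measurable_snd))).prodMk
          (measurable_snd.comp measurable_snd))
    exact (hf_meas a).comp hm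
  have hφ_bdd : ∀ p, ‖φ p‖ ≤ C := fun p => hC _ _ _ _
  -- law of (εU, εR) is QU.prod QR
  have hY : P.map (fun ω => (εU ω, εR ω)) = ν := by
    rw [(ProbabilityTheory.indepFun_iff_map_prod_eq_prod_map_map hεU.aemeasurable
      hεR.aemeasurable).mp hindep2, hQU, hQR]
  have hZmeas : Measurable fun ω => (X ω, (εU ω, εR ω)) := hX.prodMk (hεU.prodMk hεR)
  have hZ : P.map (fun ω => (X ω, (εU ω, εR ω))) = (P.map X).prod ν := by
    rw [(ProbabilityTheory.indepFun_iff_map_prod_eq_prod_map_map hX.aemeasurable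
      (hεU.prodMk hεR).aemeasurable).mp hindep1, hY]
  haveI : IsProbabilityMeasure ν := by infer_instance
  -- Q x a equals the integral of φ (x, ·) over ν
  have hint_x : ∀ x : 𝒳, Integrable (fun y : ℰU × ℰR => φ (x, y)) ν := fun x =>
    ⟨(hφ_meas.comp measurable_prodMk_left).aestronglyMeasurable,
      HasFiniteIntegral.of_bounded (C := C)
        (Filter.Eventually.of_forall fun y => hφ_bdd (x, y))⟩
  have hQν : ∀ x, Q x a = ∫ y, φ (x, y) ∂ν := by
    intro x
    calc Q x a = ∫ r, ∫ u, f x (s x u) a r ∂QU ∂QR := hQ x a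
      _ = ∫ u, ∫ r, f x (s x u) a r ∂QR ∂QU :=
          (integral_integral_swap (f := fun u r => f x (s x u) a r) (hint_x x)).symm
      _ = ∫ y, φ (x, y) ∂ν := (integral_prod _ (hint_x x)).symm
  -- measurability of x ↦ Q x a
  have hQmeas : StronglyMeasurable fun x => Q x a := by
    have heq : (fun x => Q x a) = fun x => ∫ y, φ (x, y) ∂ν := funext hQν
    rw [heq]
    exact (hφ_meas.stronglyMeasurable).integral_prod_right'
  have hQbdd : ∀ x, ‖Q x a‖ ≤ C := by
    intro x
    rw [hQν x]
    calc ‖∫ y, φ (x, y) ∂ν‖ ≤ C * (ν Set.univ).toReal :=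
          norm_integral_le_of_norm_le_const (Filter.Eventually.of_forall fun y => hφ_bdd (x, y))
      _ = C := by simp
  -- the reward function is integrable
  have hR_meas : Measurable fun ω => f (X ω) (s (X ω) (εU ω)) a (εR ω) := hφ_meas.comp hZmeas
  have hR_int : Integrable (fun ω => f (X ω) (s (X ω) (εU ω)) a (εR ω)) P :=
    ⟨hR_meas.aestronglyMeasurable, HasFiniteIntegral.of_bounded (C := C)
      (Filter.Eventually.of_forall fun ω => hφ_bdd (X ω, (εU ω, εR ω)))⟩
  have hg_meas : Measurable[MeasurableSpace.comap X inferInstance] fun ω => Q (X ω) a :=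
    hQmeas.measurable.comp (comap_measurable X)
  have hg_int : Integrable (fun ω => Q (X ω) a) P :=
    ⟨((hQmeas.measurable.comp hX).stronglyMeasurable).aestronglyMeasurable,
      HasFiniteIntegral.of_bounded (C := C)
        (Filter.Eventually.of_forall fun ω => hQbdd (X ω))⟩
  refine (ae_eq_condExp_of_forall_setIntegral_eq hX.comap_le hR_int
    (fun t _ _ => hg_int.integrableOn) ?_
    (StronglyMeasurable.aestronglyMeasurable
      (Measurable.stronglyMeasurable hg_meas))).symm
  rintro t ⟨A, hA, rfl⟩ -
  -- both sides as integrals against the law of X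
  have hpre : (fun ω => (X ω, (εU ω, εR ω))) ⁻¹' (A ×ˢ (Set.univ : Set (ℰU × ℰR))) = X ⁻¹' A := by
    ext ω; simp
  have hint_restr : Integrable φ (((P.map X).restrict A).prod ν) :=
    ⟨hφ_meas.aestronglyMeasurable, HasFiniteIntegral.of_bounded (C := C)
      (Filter.Eventually.of_forall hφ_bdd)⟩
  calc ∫ ω in X ⁻¹' A, Q (X ω) a ∂P
      = ∫ x in A, Q x a ∂(P.map X) :=
        (setIntegral_map hA hQmeas.aestronglyMeasurable hX.aemeasurable).symm
    _ = ∫ x in A, ∫ y, φ (x, y) ∂ν ∂(P.map X) := by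
        exact setIntegral_congr_fun hA fun x _ => hQν x
    _ = ∫ z, φ z ∂(((P.map X).restrict A).prod ν) := (integral_prod _ hint_restr).symm
    _ = ∫ z in A ×ˢ Set.univ, φ z ∂((P.map X).prod ν) := by
        rw [← Measure.prod_restrict, Measure.restrict_univ]
    _ = ∫ z in A ×ˢ Set.univ, φ z ∂(P.map (fun ω => (X ω, (εU ω, εR ω)))) := by rw [hZ]
    _ = ∫ ω in (fun ω => (X ω, (εU ω, εR ω))) ⁻¹' (A ×ˢ Set.univ), φ (X ω, (εU ω, εR ω)) ∂P :=
        setIntegral_map (hA.prod MeasurableSet.univ) hφ_meas.aestronglyMeasurable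
          hZmeas.aemeasurable
    _ = ∫ ω in X ⁻¹' A, f (X ω) (s (X ω) (εU ω)) a (εR ω) ∂P := by rw [hpre]
end

section
/- (Consistency of greedy policy learning, Proposition 1.) Let E be a nonempty set, (μ_e)_{e∈E} a family of probability measures on 𝒳, and Q : 𝒳 × A → ℝ bounded measurable. Let (Ω, 𝒜, P) be a probability space and for each n ∈ ℕ let Q̂_n : Ω × 𝒳 × A → ℝ be an estimator such that C_n(ω) := max_{a∈A} sup_{x∈𝒳} |Q̂_n(ω, x, a) − Q(x,a)| is measurable and integrable with lim_{n→∞} E_P[C_n] = 0. For each n and ω, let π̂_n(ω) be any policy that is greedy with respect to Q̂_n(ω, ·, ·), and assume ω ↦ |inf_{e∈E} V(π̂_n(ω), μ_e) − sup_{π policy} inf_{e∈E} V(π, μ_e)| is measurable. Then lim_{n→∞} E_P[ |inf_{e∈E} V(π̂_n(·), μ_e) − sup_{π policy} inf_{e∈E} V(π, μ_e)| ] = 0, i.e., the robust policy value of the estimated greedy policy converges in expectation to the optimal robust value. -/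
open MeasureTheory

section Helpers

variable {𝒳 A : Type*} [MeasurableSpace 𝒳] [Fintype A]

noncomputable instance instNonemptyPolicy [Nonempty A] : Nonempty (Policy 𝒳 A) := by
  refine ⟨⟨fun _ _ => (Fintype.card A : ℝ)⁻¹, fun _ _ => by positivity, fun x => ?_,
    fun a => measurable_const⟩⟩
  rw [Finset.sum_const, Finset.card_univ, nsmul_eq_mul,
    mul_inv_cancel₀ (Nat.cast_ne_zero.mpr Fintype.card_ne_zero)]

lemma sum_abs_le_bound (π : Policy 𝒳 A) (Q : 𝒳 → A → ℝ) {B : ℝ}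
    (hB : ∀ x a, |Q x a| ≤ B) (x : 𝒳) :
    |∑ a, π.prob x a * Q x a| ≤ B := by
  calc |∑ a, π.prob x a * Q x a| ≤ ∑ a, |π.prob x a * Q x a| :=
        Finset.abs_sum_le_sum_abs _ _
    _ ≤ ∑ a, π.prob x a * B := by
        apply Finset.sum_le_sum
        intro a _
        rw [abs_mul, abs_of_nonneg (π.nonneg x a)]
        exact mul_le_mul_of_nonneg_left (hB x a) (π.nonneg x a)
    _ = B := by rw [← Finset.sum_mul, π.sum_one, one_mul]

lemma integrable_policy (π : Policy 𝒳 A) (Q : 𝒳 → A → ℝ)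
    (hQmeas : ∀ a, Measurable fun x => Q x a) {B : ℝ} (hB : ∀ x a, |Q x a| ≤ B)
    (μ : MeasureTheory.Measure 𝒳) [MeasureTheory.IsFiniteMeasure μ] :
    MeasureTheory.Integrable (fun x => ∑ a, π.prob x a * Q x a) μ := by
  have hm : Measurable fun x => ∑ a, π.prob x a * Q x a :=
    Finset.measurable_sum _ fun a _ => (π.measurable a).mul (hQmeas a)
  refine ⟨hm.aestronglyMeasurable, ?_⟩
  exact MeasureTheory.HasFiniteIntegral.of_bounded
    (C := B) (Filter.Eventually.of_forall fun x => by
      simpa [Real.norm_eq_abs] using sum_abs_le_bound π Q hB x)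

lemma abs_value_le (π : Policy 𝒳 A) (Q : 𝒳 → A → ℝ) {B : ℝ}
    (hB : ∀ x a, |Q x a| ≤ B)
    (μ : MeasureTheory.Measure 𝒳) [MeasureTheory.IsProbabilityMeasure μ] :
    |value π Q μ| ≤ B := by
  have := MeasureTheory.norm_integral_le_of_norm_le_const
    (μ := μ) (f := fun x => ∑ a, π.prob x a * Q x a) (C := B)
    (Filter.Eventually.of_forall fun x => by
      simpa [Real.norm_eq_abs] using sum_abs_le_bound π Q hB x)
  simpa [value, Real.norm_eq_abs] using this

lemma value_le_greedy [Nonempty A] (π πg : Policy 𝒳 A) (Q Qh : 𝒳 → A → ℝ)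
    (hg : IsGreedy πg Qh) {c : ℝ} (hc : ∀ x a, |Qh x a - Q x a| ≤ c)
    (hQmeas : ∀ a, Measurable fun x => Q x a) {B : ℝ} (hB : ∀ x a, |Q x a| ≤ B)
    (μ : MeasureTheory.Measure 𝒳) [MeasureTheory.IsProbabilityMeasure μ] :
    value π Q μ ≤ value πg Q μ + 2 * c := by
  have hpt : ∀ x, (∑ a, π.prob x a * Q x a) ≤ (∑ a, πg.prob x a * Q x a) + 2 * c := by
    intro x
    set M := ⨆ a' : A, Qh x a' with hM
    have hbdd : BddAbove (Set.range fun a : A => Qh x a) :=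
      Set.Finite.bddAbove (Set.finite_range _)
    have hQle : ∀ a, Q x a ≤ Qh x a + c := fun a => by
      have := abs_le.mp (hc x a); linarith [this.1]
    have hQge : ∀ a, Qh x a ≤ Q x a + c := fun a => by
      have := abs_le.mp (hc x a); linarith [this.2]
    have h1 : (∑ a, π.prob x a * Q x a) ≤ (∑ a, π.prob x a * Qh x a) + c := by
      have : (∑ a, π.prob x a * Q x a) ≤ ∑ a, (π.prob x a * Qh x a + π.prob x a * c) := by
        apply Finset.sum_le_sum
        intro a _
        rw [← mul_add]
        exact mul_le_mul_of_nonneg_left (hQle a) (π.nonneg x a)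
      rwa [Finset.sum_add_distrib, ← Finset.sum_mul, π.sum_one, one_mul] at this
    have h2 : (∑ a, π.prob x a * Qh x a) ≤ M := by
      calc (∑ a, π.prob x a * Qh x a) ≤ ∑ a, π.prob x a * M := by
            apply Finset.sum_le_sum
            intro a _
            exact mul_le_mul_of_nonneg_left (le_ciSup hbdd a) (π.nonneg x a)
        _ = M := by rw [← Finset.sum_mul, π.sum_one, one_mul]
    have h3 : M = ∑ a, πg.prob x a * Qh x a := by
      have : ∀ a ∈ Finset.univ, πg.prob x a * Qh x a = πg.prob x a * M := by
        intro a _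
        rcases eq_or_lt_of_le (πg.nonneg x a) with h | h
        · rw [← h, zero_mul, zero_mul]
        · rw [hg x a h]
      rw [Finset.sum_congr rfl this, ← Finset.sum_mul, πg.sum_one, one_mul]
    have h4 : (∑ a, πg.prob x a * Qh x a) ≤ (∑ a, πg.prob x a * Q x a) + c := by
      have : (∑ a, πg.prob x a * Qh x a) ≤ ∑ a, (πg.prob x a * Q x a + πg.prob x a * c) := by
        apply Finset.sum_le_sum
        intro a _
        rw [← mul_add]
        exact mul_le_mul_of_nonneg_left (hQge a) (πg.nonneg x a)
      rwa [Finset.sum_add_distrib, ← Finset.sum_mul, πg.sum_one, one_mul] at this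
    linarith
  have hint1 := integrable_policy π Q hQmeas hB μ
  have hint2 := integrable_policy πg Q hQmeas hB μ
  calc value π Q μ ≤ ∫ x, ((∑ a, πg.prob x a * Q x a) + 2 * c) ∂μ :=
        MeasureTheory.integral_mono hint1
          (hint2.add (MeasureTheory.integrable_const _)) hpt
    _ = value πg Q μ + 2 * c := by
        rw [MeasureTheory.integral_add hint2 (MeasureTheory.integrable_const _),
          MeasureTheory.integral_const]
        simp [value]

end Helpers


/-- Proposition 1 (consistency of greedy policy learning): if the estimators `Q̂ₙ`
are uniformly consistent for the invariant mean reward `Q` (in the sense that the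
expected uniform error `Cₙ` converges to 0), then the robust policy value of any
policy greedy w.r.t. `Q̂ₙ` converges in expectation to the optimal robust value. -/
theorem greedy_policy_learning_consistent
    {𝒳 : Type*} [MeasurableSpace 𝒳] [Nonempty 𝒳] {A : Type*} [Fintype A] [Nonempty A]
    {E : Type*} [Nonempty E]
    (μ : E → Measure 𝒳) (hμ : ∀ e, IsProbabilityMeasure (μ e))
    (Q : 𝒳 → A → ℝ)
    (hQmeas : ∀ a, Measurable fun x => Q x a)
    (hQbdd : ∃ C, ∀ x a, |Q x a| ≤ C)
    {Ω : Type*} [MeasurableSpace Ω] (P : Measure Ω) [IsProbabilityMeasure P]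
    (Qhat : ℕ → Ω → 𝒳 → A → ℝ)
    (C : ℕ → Ω → ℝ)
    (hCbdd : ∀ n ω, BddAbove (Set.range fun p : 𝒳 × A => |Qhat n ω p.1 p.2 - Q p.1 p.2|))
    (hC : ∀ n ω, C n ω = ⨆ a : A, ⨆ x : 𝒳, |Qhat n ω x a - Q x a|)
    (hCmeas : ∀ n, Measurable (C n))
    (hCint : ∀ n, Integrable (C n) P)
    (hCtendsto : Filter.Tendsto (fun n => ∫ ω, C n ω ∂P) Filter.atTop (nhds 0))
    (πhat : ℕ → Ω → Policy 𝒳 A)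
    (hgreedy : ∀ n ω, IsGreedy (πhat n ω) (Qhat n ω))
    (hmeas : ∀ n, Measurable fun ω =>
      |(⨅ e, value (πhat n ω) Q (μ e)) - ⨆ π : Policy 𝒳 A, ⨅ e, value π Q (μ e)|) :
    Filter.Tendsto
      (fun n => ∫ ω,
        |(⨅ e, value (πhat n ω) Q (μ e)) - ⨆ π : Policy 𝒳 A, ⨅ e, value π Q (μ e)| ∂P)
      Filter.atTop (nhds 0) := by
  obtain ⟨B, hB⟩ := hQbdd
  set S := ⨆ π : Policy 𝒳 A, ⨅ e, value π Q (μ e) with hS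
  have hinfbdd : ∀ π : Policy 𝒳 A, BddBelow (Set.range fun e => value π Q (μ e)) := by
    intro π
    refine ⟨-B, ?_⟩
    rintro y ⟨e, rfl⟩
    have := hμ e
    exact neg_le_of_abs_le (abs_value_le π Q hB (μ e))
  have hIle : ∀ π : Policy 𝒳 A, (⨅ e, value π Q (μ e)) ≤ B := by
    intro π
    refine le_trans (ciInf_le (hinfbdd π) (Classical.arbitrary E)) ?_
    have := hμ (Classical.arbitrary E)
    exact le_of_abs_le (abs_value_le π Q hB _)
  have hsupbdd : BddAbove (Set.range fun π : Policy 𝒳 A => ⨅ e, value π Q (μ e)) := by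
    refine ⟨B, ?_⟩
    rintro y ⟨π, rfl⟩
    exact hIle π
  have key : ∀ n ω,
      |(⨅ e, value (πhat n ω) Q (μ e)) - S| ≤ 2 * C n ω := by
    intro n ω
    have hcbd : ∀ x a, |Qhat n ω x a - Q x a| ≤ C n ω := by
      intro x a
      rw [hC n ω]
      have hinner : BddAbove (Set.range fun x : 𝒳 => |Qhat n ω x a - Q x a|) := by
        refine (hCbdd n ω).mono ?_
        rintro y ⟨x, rfl⟩
        exact ⟨(x, a), rfl⟩
      have houter : BddAbove (Set.range fun a : A => ⨆ x : 𝒳, |Qhat n ω x a - Q x a|) :=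
        Set.Finite.bddAbove (Set.finite_range _)
      exact le_trans (le_ciSup hinner x) (le_ciSup houter a)
    have h0 : (⨅ e, value (πhat n ω) Q (μ e)) ≤ S := le_ciSup hsupbdd _
    have hS2 : S ≤ (⨅ e, value (πhat n ω) Q (μ e)) + 2 * C n ω := by
      apply ciSup_le
      intro π
      have hge : ∀ e, value π Q (μ e) ≤ value (πhat n ω) Q (μ e) + 2 * C n ω := by
        intro e
        have := hμ e
        exact value_le_greedy π (πhat n ω) Q (Qhat n ω) (hgreedy n ω) hcbd hQmeas hB (μ e)
      have : (⨅ e, value π Q (μ e)) - 2 * C n ω ≤ ⨅ e, value (πhat n ω) Q (μ e) := by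
        apply le_ciInf
        intro e
        have h1 := ciInf_le (hinfbdd π) e
        linarith [hge e]
      linarith
    rw [abs_sub_comm, abs_of_nonneg (sub_nonneg.mpr h0)]
    linarith
  have hbound : ∀ n, ∫ ω,
      |(⨅ e, value (πhat n ω) Q (μ e)) - S| ∂P ≤ 2 * ∫ ω, C n ω ∂P := by
    intro n
    calc ∫ ω, |(⨅ e, value (πhat n ω) Q (μ e)) - S| ∂P
        ≤ ∫ ω, 2 * C n ω ∂P :=
          integral_mono_of_nonneg (Filter.Eventually.of_forall fun ω => abs_nonneg _)
            ((hCint n).const_mul 2) (Filter.Eventually.of_forall fun ω => key n ω)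
      _ = 2 * ∫ ω, C n ω ∂P := integral_const_mul 2 _
  have hnonneg : ∀ n, 0 ≤ ∫ ω,
      |(⨅ e, value (πhat n ω) Q (μ e)) - S| ∂P := by
    intro n
    exact integral_nonneg fun ω => abs_nonneg _
  have h2C : Filter.Tendsto (fun n => 2 * ∫ ω, C n ω ∂P) Filter.atTop (nhds 0) := by
    simpa using hCtendsto.const_mul 2
  exact tendsto_of_tendsto_of_tendsto_of_le_of_le tendsto_const_nhds h2C hnonneg hbound
end

section
/- (Pooled maximizers are almost-everywhere greedy; key step in the proof of Proposition 3.) Let E be a nonempty set and E_obs ⊆ E a finite nonempty subset. Let ν be a σ-finite measure on 𝒳 and suppose that for every e ∈ E the probability measure μ_e on 𝒳 has a ν-a.e. strictly positive density with respect to ν. Let Q : 𝒳 × A → ℝ be bounded measurable. If π* maximizes π ↦ Σ_{e∈E_obs} V(π, μ_e) over all policies, then Σ_{a∈A} π*(a|x) Q(x,a) = max_{a∈A} Q(x,a) for ν-almost every x ∈ 𝒳, and consequently V(π*, μ_e) = ∫_𝒳 max_{a∈A} Q(x,a) dμ_e(x) for every e ∈ E. -/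
/-!
At each context a policy earns at most `max_a Q(x,a)`, and the uniform distribution on the
maximizers of `Q(x,·)` earns exactly that. So in every observed environment `π*` is worth at most
this greedy policy, while pooled optimality makes the sums equal; hence the values agree in each
observed environment, and the nonnegative pointwise gap, having integral zero, vanishes `μ_e`-a.e.
A density that is positive `ν`-a.e. makes `ν ≪ μ_e ≪ ν`, which carries this to `ν` and back to
every `μ_e`.
-/
open MeasureTheory

section

variable {𝒳 A : Type*}

noncomputable def argmaxIndicator (Q : 𝒳 → A → ℝ) (x : 𝒳) (a : A) : ℝ :=
  if Q x a = ⨆ b, Q x b then 1 else 0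

lemma argmaxIndicator_nonneg (Q : 𝒳 → A → ℝ) (x : 𝒳) (a : A) : 0 ≤ argmaxIndicator Q x a := by
  unfold argmaxIndicator; split_ifs <;> norm_num

lemma argmaxIndicator_mul (Q : 𝒳 → A → ℝ) (x : 𝒳) (a : A) :
    argmaxIndicator Q x a * Q x a = argmaxIndicator Q x a * ⨆ b, Q x b := by
  unfold argmaxIndicator; split_ifs with h <;> simp [h]

lemma sum_argmaxIndicator_pos [Fintype A] [Nonempty A] (Q : 𝒳 → A → ℝ) (x : 𝒳) :
    0 < ∑ a, argmaxIndicator Q x a := by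
  obtain ⟨a, ha⟩ : ∃ a, Q x a = ⨆ b, Q x b := exists_eq_ciSup_of_finite
  refine lt_of_lt_of_le ?_
    (Finset.single_le_sum (fun b _ => argmaxIndicator_nonneg Q x b) (Finset.mem_univ a))
  simp [argmaxIndicator, ha]

lemma measurable_argmaxIndicator [MeasurableSpace 𝒳] [Countable A]
    {Q : 𝒳 → A → ℝ} (hQ : ∀ a, Measurable fun x => Q x a) (a : A) :
    Measurable fun x => argmaxIndicator Q x a :=
  Measurable.ite (measurableSet_eq_fun (hQ a) (Measurable.iSup hQ)) measurable_const
    measurable_const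

namespace Policy

variable [MeasurableSpace 𝒳] [Fintype A]

lemma prob_le_one (π : Policy 𝒳 A) (x : 𝒳) (a : A) : π.prob x a ≤ 1 :=
  π.sum_one x ▸ Finset.single_le_sum (fun b _ => π.nonneg x b) (Finset.mem_univ a)

lemma sum_prob_mul_le_iSup (π : Policy 𝒳 A) (Q : 𝒳 → A → ℝ) (x : 𝒳) :
    ∑ a, π.prob x a * Q x a ≤ ⨆ a, Q x a :=
  calc ∑ a, π.prob x a * Q x a ≤ ∑ a, π.prob x a * ⨆ b, Q x b :=
        Finset.sum_le_sum fun a _ =>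
          mul_le_mul_of_nonneg_left (le_ciSup (Finite.bddAbove_range _) a) (π.nonneg x a)
    _ = ⨆ b, Q x b := by rw [← Finset.sum_mul, π.sum_one, one_mul]

lemma integrable_sum_prob_mul (π : Policy 𝒳 A) {Q : 𝒳 → A → ℝ} {μ : Measure 𝒳}
    (hQ : ∀ a, Integrable (fun x => Q x a) μ) :
    Integrable (fun x => ∑ a, π.prob x a * Q x a) μ :=
  integrable_finsetSum _ fun a _ =>
    (hQ a).bdd_mul (π.measurable a).aestronglyMeasurable <| ae_of_all _ fun x => by
      rw [Real.norm_of_nonneg (π.nonneg x a)]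
      exact π.prob_le_one x a

noncomputable def greedy [Nonempty A] (Q : 𝒳 → A → ℝ) (hQ : ∀ a, Measurable fun x => Q x a) :
    Policy 𝒳 A where
  prob x a := argmaxIndicator Q x a / ∑ b, argmaxIndicator Q x b
  nonneg x a := div_nonneg (argmaxIndicator_nonneg Q x a) (sum_argmaxIndicator_pos Q x).le
  sum_one x := by rw [← Finset.sum_div, div_self (sum_argmaxIndicator_pos Q x).ne']
  measurable a := (measurable_argmaxIndicator hQ a).div
    (Finset.measurable_sum _ fun b _ => measurable_argmaxIndicator hQ b)

variable [Nonempty A] {Q : 𝒳 → A → ℝ} (hQ : ∀ a, Measurable fun x => Q x a)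

lemma sum_greedy_prob_mul (x : 𝒳) : ∑ a, (greedy Q hQ).prob x a * Q x a = ⨆ a, Q x a := by
  simp only [greedy, div_mul_eq_mul_div, argmaxIndicator_mul, ← Finset.sum_div, ← Finset.sum_mul]
  exact mul_div_cancel_left₀ _ (sum_argmaxIndicator_pos Q x).ne'

lemma sum_prob_mul_le_sum_greedy_prob_mul (π : Policy 𝒳 A) (x : 𝒳) :
    ∑ a, π.prob x a * Q x a ≤ ∑ a, (greedy Q hQ).prob x a * Q x a :=
  (sum_greedy_prob_mul hQ x).symm ▸ π.sum_prob_mul_le_iSup Q x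

variable {μ : Measure 𝒳} (hQμ : ∀ a, Integrable (fun x => Q x a) μ)
include hQμ

lemma value_le_value_greedy (π : Policy 𝒳 A) : value π Q μ ≤ value (greedy Q hQ) Q μ :=
  integral_mono (π.integrable_sum_prob_mul hQμ) ((greedy Q hQ).integrable_sum_prob_mul hQμ)
    (π.sum_prob_mul_le_sum_greedy_prob_mul hQ)

lemma ae_sum_prob_mul_eq_iSup_of_value_eq {π : Policy 𝒳 A}
    (h : value π Q μ = value (greedy Q hQ) Q μ) :
    ∀ᵐ x ∂μ, ∑ a, π.prob x a * Q x a = ⨆ a, Q x a := by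
  have hae := (integral_eq_iff_of_ae_le (π.integrable_sum_prob_mul hQμ)
    ((greedy Q hQ).integrable_sum_prob_mul hQμ)
    (ae_of_all _ (π.sum_prob_mul_le_sum_greedy_prob_mul hQ))).1 h
  filter_upwards [hae] with x hx
  exact hx.trans (sum_greedy_prob_mul hQ x)

end Policy

end

theorem pooled_maximizer_is_ae_greedy_general
    {𝒳 : Type*} [MeasurableSpace 𝒳] {A : Type*} [Fintype A] [Nonempty A]
    {E : Type*} (Eobs : Finset E) (hEobs : Eobs.Nonempty)
    (ν : Measure 𝒳)
    (μ : E → Measure 𝒳) (hμ : ∀ e, IsProbabilityMeasure (μ e))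
    (d : E → 𝒳 → ENNReal)
    (hd_meas : ∀ e, Measurable (d e))
    (hd : ∀ e, μ e = ν.withDensity (d e))
    (hd_pos : ∀ e, ∀ᵐ x ∂ν, 0 < d e x)
    (Q : 𝒳 → A → ℝ)
    (hQmeas : ∀ a, Measurable fun x => Q x a)
    (hQbdd : ∃ C, ∀ x a, |Q x a| ≤ C)
    (πstar : Policy 𝒳 A)
    (hmax : ∀ π : Policy 𝒳 A,
      ∑ e ∈ Eobs, value π Q (μ e) ≤ ∑ e ∈ Eobs, value πstar Q (μ e)) :
    (∀ᵐ x ∂ν, ∑ a, πstar.prob x a * Q x a = ⨆ a : A, Q x a) ∧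
      ∀ e, value πstar Q (μ e) = ∫ x, ⨆ a : A, Q x a ∂(μ e) := by
  obtain ⟨C, hC⟩ := hQbdd
  have hQint (e : E) (a : A) : Integrable (fun x => Q x a) (μ e) :=
    have := hμ e
    .of_bound (hQmeas a).aestronglyMeasurable C (ae_of_all _ fun x => hC x a)
  let greedy := Policy.greedy Q hQmeas
  have hle : ∀ e ∈ Eobs, value πstar Q (μ e) ≤ value greedy Q (μ e) := fun e _ =>
    πstar.value_le_value_greedy hQmeas (hQint e)
  have heq : ∀ e ∈ Eobs, value πstar Q (μ e) = value greedy Q (μ e) :=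
    (Finset.sum_eq_sum_iff_of_le hle).1 ((Finset.sum_le_sum hle).antisymm (hmax greedy))
  obtain ⟨e₀, he₀⟩ := hEobs
  have hν_ac : ν ≪ μ e₀ := hd e₀ ▸ withDensity_absolutelyContinuous'
    (hd_meas e₀).aemeasurable ((hd_pos e₀).mono fun _ hx => hx.ne')
  have hgreedy : ∀ᵐ x ∂ν, ∑ a, πstar.prob x a * Q x a = ⨆ a, Q x a := hν_ac.ae_le
    (Policy.ae_sum_prob_mul_eq_iSup_of_value_eq hQmeas (hQint e₀) (heq e₀ he₀))
  refine ⟨hgreedy, fun e => integral_congr_ae ?_⟩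
  exact (hd e ▸ withDensity_absolutelyContinuous ν (d e)).ae_le hgreedy

/-- Key step in the proof of Proposition 3: a maximizer of the pooled value over the
observed environments is ν-a.e. greedy w.r.t. `Q`, and hence attains the value
`∫ max_a Q(x,a) dμ_e(x)` in every environment. -/
theorem pooled_maximizer_is_ae_greedy
    {𝒳 : Type*} [MeasurableSpace 𝒳] {A : Type*} [Fintype A] [Nonempty A]
    {E : Type*} [Nonempty E] (Eobs : Finset E) (hEobs : Eobs.Nonempty)
    (ν : Measure 𝒳) [SigmaFinite ν]
    (μ : E → Measure 𝒳) (hμ : ∀ e, IsProbabilityMeasure (μ e))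
    (d : E → 𝒳 → ENNReal)
    (hd_meas : ∀ e, Measurable (d e))
    (hd : ∀ e, μ e = ν.withDensity (d e))
    (hd_pos : ∀ e, ∀ᵐ x ∂ν, 0 < d e x)
    (Q : 𝒳 → A → ℝ)
    (hQmeas : ∀ a, Measurable fun x => Q x a)
    (hQbdd : ∃ C, ∀ x a, |Q x a| ≤ C)
    (πstar : Policy 𝒳 A)
    (hmax : ∀ π : Policy 𝒳 A,
      ∑ e ∈ Eobs, value π Q (μ e) ≤ ∑ e ∈ Eobs, value πstar Q (μ e)) :
    (∀ᵐ x ∂ν, ∑ a, πstar.prob x a * Q x a = ⨆ a : A, Q x a) ∧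
      ∀ e, value πstar Q (μ e) = ∫ x, ⨆ a : A, Q x a ∂(μ e) :=
  pooled_maximizer_is_ae_greedy_general Eobs hEobs ν μ hμ d hd_meas hd hd_pos Q hQmeas hQbdd πstar
    hmax
end
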